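/- Let n_old > 2 and v_old > 0, and let 0 < α < 1. After the decay update v_new = (1−α)v_old and n_new = (1−α)n_old (assuming n_new > 2), the quantity v/(n²/2 − n) strictly increases: v_new/(n_new²/2 − n_new) > v_old/(n_old²/2 − n_old). -/
import Mathlib

/-- Dynamic Thompson Sampling decay strictly increases the posterior variance
of the mean: if `n_old > 2`, `v_old > 0`, `0 < α < 1`, and the decayed count
`(1-α) * n_old` still exceeds 2, then
`v_new / (n_new²/2 - n_new) > v_old / (n_old²/2 - n_old)`
for `v_new = (1-α) v_old` and `n_new = (1-α) n_old`. -/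
theorem dts_decay_increases_posterior_variance
    (nOld vOld α : ℝ) (hn : 2 < nOld) (hv : 0 < vOld)
    (hα0 : 0 < α) (hα1 : α < 1) (hn' : 2 < (1 - α) * nOld) :
    vOld / (nOld ^ 2 / 2 - nOld)
      < ((1 - α) * vOld) / (((1 - α) * nOld) ^ 2 / 2 - (1 - α) * nOld) := by
  have hβ : 0 < 1 - α := by linarith
  have hn0 : 0 < nOld := by linarith
  have hv' : 0 < (1 - α) * vOld := mul_pos hβ hv
  have h1 : (0:ℝ) < ((1 - α) * nOld) ^ 2 / 2 - (1 - α) * nOld := by nlinarith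
  have h2 : ((1 - α) * nOld) ^ 2 / 2 - (1 - α) * nOld
      < (1 - α) * (nOld ^ 2 / 2 - nOld) := by nlinarith
  have key := div_lt_div_of_pos_left hv' h1 h2
  rwa [mul_div_mul_left vOld _ (ne_of_gt hβ)] at key
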